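/- arXiv:2404.13209 — 3 statements merged into one kernel-verified Lean document; each statement's English description precedes it below -/
import Mathlib

section
/- Suppose (z₁, e^{iφ} z₂) ∈ L ∩ L_φ with z₂ ≠ 0, where L and L_φ are the tori associated to a Jordan curve γ and angle φ. Then the four complex numbers z₁+z₂, z₁+z₂e^{iφ}, z₁-z₂, z₁-z₂e^{iφ} all lie on the image of γ, and they form the vertices of a rectangle in ℂ whose diagonals meet at angle φ. -/
open Complex

/-- The Lagrangian torus `L = l(γ×γ)`. -/
def torusL (γ : Circle → ℂ) : Set (ℂ × ℂ) :=
  {p | ∃ t₁ t₂ : Circle, p = ((γ t₁ + γ t₂) / 2, (γ t₁ - γ t₂) / 2)}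

/-- The rotated Lagrangian torus `L_φ = R_φ(l(γ×γ))`. -/
def torusLphi (γ : Circle → ℂ) (φ : ℝ) : Set (ℂ × ℂ) :=
  {p | ∃ t₃ t₄ : Circle,
    p = ((γ t₃ + γ t₄) / 2, Complex.exp (φ * Complex.I) * ((γ t₃ - γ t₄) / 2))}

/-- An intersection point `(z₁, e^{iφ}z₂) ∈ L ∩ L_φ` with `z₂ ≠ 0` yields four points
`z₁±z₂`, `z₁±z₂e^{iφ}` on the curve `γ`, forming the vertices of a rectangle with
aspect angle `φ`: all four lie on the circle of radius `|z₂|` centered at `z₁`. -/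
theorem stmt_5 (γ : Circle → ℂ) (hγ : Function.Injective γ) (φ : ℝ)
    (hφ : 0 < φ ∧ φ ≤ Real.pi / 2) (z₁ z₂ : ℂ) (hz₂ : z₂ ≠ 0)
    (hmem : ((z₁, Complex.exp (φ * Complex.I) * z₂) : ℂ × ℂ) ∈
      torusL γ ∩ torusLphi γ φ) :
    (z₁ + z₂ ∈ Set.range γ ∧
     z₁ + z₂ * Complex.exp (φ * Complex.I) ∈ Set.range γ ∧
     z₁ - z₂ ∈ Set.range γ ∧
     z₁ - z₂ * Complex.exp (φ * Complex.I) ∈ Set.range γ) ∧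
    (‖(z₁ + z₂) - z₁‖ = ‖z₂‖ ∧
     ‖(z₁ + z₂ * Complex.exp (φ * Complex.I)) - z₁‖ = ‖z₂‖ ∧
     ‖(z₁ - z₂) - z₁‖ = ‖z₂‖ ∧
     ‖(z₁ - z₂ * Complex.exp (φ * Complex.I)) - z₁‖ = ‖z₂‖) := by
  obtain ⟨⟨t₁, t₂, h1⟩, ⟨t₃, t₄, h2⟩⟩ := hmem
  have he : Complex.exp (φ * Complex.I) ≠ 0 := Complex.exp_ne_zero _
  have h1a : z₁ = (γ t₁ + γ t₂) / 2 := congrArg Prod.fst h1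
  have h1b : Complex.exp (φ * Complex.I) * z₂ = (γ t₁ - γ t₂) / 2 := congrArg Prod.snd h1
  have h2a : z₁ = (γ t₃ + γ t₄) / 2 := congrArg Prod.fst h2
  have h2b : z₂ = (γ t₃ - γ t₄) / 2 := by
    have := congrArg Prod.snd h2
    simp only at this
    exact mul_left_cancel₀ he this
  have habs : ‖Complex.exp (φ * Complex.I)‖ = 1 :=
    Complex.norm_exp_ofReal_mul_I φ
  refine ⟨⟨⟨t₃, ?_⟩, ⟨t₁, ?_⟩, ⟨t₄, ?_⟩, ⟨t₂, ?_⟩⟩, ?_, ?_, ?_, ?_⟩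
  · rw [h2a, h2b]; ring
  · rw [h1a, mul_comm, h1b]; ring
  · rw [h2a, h2b]; ring
  · rw [h1a, mul_comm, h1b]; ring
  · simp
  · simp [habs]
  · simp
  · simp [habs]
end

section
/- If p = (z₁, e^{iφ} z₂) is an intersection point of L and L_φ with z₂ ≠ 0, then ϱ(p) = (z₁, -e^{iφ} z₂) is also an intersection point of L and L_φ, ϱ(p) ≠ p, and the rectangle determined by ϱ(p) (namely the set {z₁ - z₂, z₁ - z₂e^{iφ}, z₁ + z₂, z₁ + z₂e^{iφ}}) coincides as a set with the rectangle determined by p. -/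
open Complex

/-- The involution `ϱ(z₁,z₂) = (z₁,-z₂)`. -/
def rhoInv (p : ℂ × ℂ) : ℂ × ℂ := (p.1, -p.2)

/-- If `p = (z₁, e^{iφ}z₂) ∈ L ∩ L_φ` with `z₂ ≠ 0`, then `ϱ(p) ∈ L ∩ L_φ`,
`ϱ(p) ≠ p`, and the rectangle determined by `ϱ(p)` coincides as a set with the
rectangle determined by `p`. -/
theorem stmt_7 (γ : Circle → ℂ) (hγ : Function.Injective γ) (φ : ℝ) (z₁ z₂ : ℂ)
    (hz₂ : z₂ ≠ 0)
    (hmem : ((z₁, Complex.exp (φ * Complex.I) * z₂) : ℂ × ℂ) ∈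
      torusL γ ∩ torusLphi γ φ) :
    rhoInv (z₁, Complex.exp (φ * Complex.I) * z₂) ∈ torusL γ ∩ torusLphi γ φ ∧
    rhoInv (z₁, Complex.exp (φ * Complex.I) * z₂) ≠
      ((z₁, Complex.exp (φ * Complex.I) * z₂) : ℂ × ℂ) ∧
    ({z₁ + -z₂, z₁ + -z₂ * Complex.exp (φ * Complex.I),
      z₁ - -z₂, z₁ - -z₂ * Complex.exp (φ * Complex.I)} : Set ℂ) =
    ({z₁ + z₂, z₁ + z₂ * Complex.exp (φ * Complex.I),
      z₁ - z₂, z₁ - z₂ * Complex.exp (φ * Complex.I)} : Set ℂ) := by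
  obtain ⟨⟨t₁, t₂, h₁⟩, ⟨t₃, t₄, h₂⟩⟩ := hmem
  rw [Prod.mk.injEq] at h₁ h₂
  refine ⟨⟨⟨t₂, t₁, ?_⟩, ⟨t₄, t₃, ?_⟩⟩, ?_, ?_⟩
  · simp only [rhoInv, Prod.mk.injEq]
    exact ⟨by linear_combination h₁.1, by linear_combination -h₁.2⟩
  · simp only [rhoInv, Prod.mk.injEq]
    exact ⟨by linear_combination h₂.1, by linear_combination -h₂.2⟩
  · simp only [rhoInv, Prod.ext_iff, ne_eq, not_and]
    intro _
    simp [neg_eq_iff_add_eq_zero, ← two_mul, Complex.exp_ne_zero, hz₂]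
  · have e1 : z₁ + -z₂ = z₁ - z₂ := by ring
    have e2 : z₁ + -z₂ * Complex.exp (φ * Complex.I) = z₁ - z₂ * Complex.exp (φ * Complex.I) := by ring
    have e3 : z₁ - -z₂ = z₁ + z₂ := by ring
    have e4 : z₁ - -z₂ * Complex.exp (φ * Complex.I) = z₁ + z₂ * Complex.exp (φ * Complex.I) := by ring
    rw [e1, e2, e3, e4]
    ext x
    simp only [Set.mem_insert_iff, Set.mem_singleton_iff]
    tauto
end

section
/- Let z₁ ∈ ℂ, z₂ ∈ ℂ with z₂ ≠ 0, and φ ∈ (0, π/2). If z₂' ∈ ℂ satisfies z₁ + z₂' = z₁ + z₂·e^{iφ} and the quadruple (z₁+z₂', z₁+z₂'e^{iφ}, z₁-z₂', z₁-z₂'e^{iφ}) is a permutation of (z₁+z₂, z₁+z₂e^{iφ}, z₁-z₂, z₁-z₂e^{iφ}), then we reach a contradiction unless e^{2iφ} = -1 (i.e. φ = π/2); hence for φ ∈ (0, π/2), z₂' = z₂e^{iφ} does not give the same vertex set. -/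
open Complex

/-- For `φ ∈ (0, π/2)` and `z₂ ≠ 0`, taking `z₂' = z₂e^{iφ}` (i.e. requiring
`z₁ + z₂' = z₁ + z₂e^{iφ}`) does not reproduce the same vertex set: the vertex set
`{z₁±z₂', z₁±z₂'e^{iφ}}` differs from `{z₁±z₂, z₁±z₂e^{iφ}}` (this would force
`e^{2iφ} = -1`, i.e. `φ = π/2`). -/
theorem stmt_19 (z₁ z₂ z₂' : ℂ) (hz₂ : z₂ ≠ 0) (φ : ℝ)
    (hφ : 0 < φ ∧ φ < Real.pi / 2)
    (h : z₁ + z₂' = z₁ + z₂ * Complex.exp (φ * Complex.I)) :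
    ({z₁ + z₂', z₁ + z₂' * Complex.exp (φ * Complex.I),
      z₁ - z₂', z₁ - z₂' * Complex.exp (φ * Complex.I)} : Set ℂ) ≠
    ({z₁ + z₂, z₁ + z₂ * Complex.exp (φ * Complex.I),
      z₁ - z₂, z₁ - z₂ * Complex.exp (φ * Complex.I)} : Set ℂ) := by
  obtain ⟨hφ0, hφ2⟩ := hφ
  have hz₂' : z₂' = z₂ * Complex.exp (φ * Complex.I) := by linear_combination h
  have hE : Complex.exp (φ * Complex.I) ≠ 0 := Complex.exp_ne_zero _
  have hsin : 0 < Real.sin φ :=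
    Real.sin_pos_of_pos_of_lt_pi hφ0 (by linarith [Real.pi_pos])
  have hsin2 : 0 < Real.sin (2 * φ) :=
    Real.sin_pos_of_pos_of_lt_pi (by linarith) (by linarith)
  intro hs
  have hmem : z₁ + z₂ * Complex.exp ((2 * φ : ℝ) * Complex.I) ∈
      ({z₁ + z₂, z₁ + z₂ * Complex.exp (φ * Complex.I),
        z₁ - z₂, z₁ - z₂ * Complex.exp (φ * Complex.I)} : Set ℂ) := by
    rw [← hs]
    have heq : z₁ + z₂ * Complex.exp ((2 * φ : ℝ) * Complex.I)
        = z₁ + z₂' * Complex.exp (φ * Complex.I) := by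
      rw [hz₂', mul_assoc, ← Complex.exp_add]
      push_cast
      ring_nf
    rw [heq]
    simp [Set.mem_insert_iff]
  have hmul : Complex.exp ((2 * φ : ℝ) * Complex.I)
      = Complex.exp (φ * Complex.I) * Complex.exp (φ * Complex.I) := by
    rw [← Complex.exp_add]; push_cast; ring_nf
  simp only [Set.mem_insert_iff, Set.mem_singleton_iff] at hmem
  rcases hmem with h1 | h2 | h3 | h4
  · have : Complex.exp ((2 * φ : ℝ) * Complex.I) = 1 :=
      mul_left_cancel₀ hz₂ (by linear_combination h1)
    have him := congrArg Complex.im this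
    rw [Complex.exp_ofReal_mul_I_im] at him
    simp at him; linarith
  · have : Complex.exp (φ * Complex.I) = 1 := by
      have h' : Complex.exp ((2 * φ : ℝ) * Complex.I) = Complex.exp (φ * Complex.I) :=
        mul_left_cancel₀ hz₂ (by linear_combination h2)
      rw [hmul] at h'
      field_simp at h'
      exact h'
    have him := congrArg Complex.im this
    rw [Complex.exp_ofReal_mul_I_im] at him
    simp at him; linarith
  · have : Complex.exp ((2 * φ : ℝ) * Complex.I) = -1 :=
      mul_left_cancel₀ hz₂ (by linear_combination h3)
    have him := congrArg Complex.im this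
    rw [Complex.exp_ofReal_mul_I_im] at him
    simp at him; linarith
  · have : Complex.exp (φ * Complex.I) = -1 := by
      have h' : Complex.exp ((2 * φ : ℝ) * Complex.I) = -Complex.exp (φ * Complex.I) :=
        mul_left_cancel₀ hz₂ (by linear_combination h4)
      rw [hmul] at h'
      have := mul_right_cancel₀ hE (by linear_combination h' : Complex.exp (φ * Complex.I) * Complex.exp (φ * Complex.I) = (-1) * Complex.exp (φ * Complex.I))
      exact this
    have him := congrArg Complex.im this
    rw [Complex.exp_ofReal_mul_I_im] at him
    simp at him; linarith
end
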